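/- Let V be a finite-dimensional complex inner product space, S and J hermitian involutions on V with product W = SJ (unitary). Let W⁺ be the span of the eigenspaces of W with eigenvalues having positive imaginary part. Then the related spaces W^{(+,+)} := span{(J + λ)z : Wz = λz, Im λ > 0} and W^{(+,−)} := span{(J − λ)z : Wz = λz, Im λ > 0} satisfy dim W^{(+,+)} = dim W^{(+,−)}, with W^{(+,+)} contained in the (+1)-eigenspace of S and W^{(+,−)} contained in the (−1)-eigenspace of S. -/
import Mathlib


theorem stmt18 {V : Type*} [NormedAddCommGroup V] [InnerProductSpace ℂ V]
    [FiniteDimensional ℂ V]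
    (S J : V →ₗ[ℂ] V)
    (hS : S.IsSymmetric) (hS2 : S ∘ₗ S = LinearMap.id)
    (hJ : J.IsSymmetric) (hJ2 : J ∘ₗ J = LinearMap.id) :
    Module.finrank ℂ ↥(Submodule.span ℂ
      {v : V | ∃ (lam : ℂ) (z : V), 0 < lam.im ∧ S (J z) = lam • z ∧ v = J z + lam • z}) =
    Module.finrank ℂ ↥(Submodule.span ℂ
      {v : V | ∃ (lam : ℂ) (z : V), 0 < lam.im ∧ S (J z) = lam • z ∧ v = J z - lam • z}) ∧
    (∀ v ∈ Submodule.span ℂ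
      {v : V | ∃ (lam : ℂ) (z : V), 0 < lam.im ∧ S (J z) = lam • z ∧ v = J z + lam • z},
      S v = v) ∧
    (∀ v ∈ Submodule.span ℂ
      {v : V | ∃ (lam : ℂ) (z : V), 0 < lam.im ∧ S (J z) = lam • z ∧ v = J z - lam • z},
      S v = -v) := by
  have hSS : ∀ v, S (S v) = v := fun v => by simpa using LinearMap.congr_fun hS2 v
  have hJJ : ∀ v, J (J v) = v := fun v => by simpa using LinearMap.congr_fun hJ2 v
  have hSz : ∀ (lam : ℂ) (z : V), 0 < lam.im → S (J z) = lam • z → S z = lam⁻¹ • J z := by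
    intro lam z him hz
    have h0 : lam ≠ 0 := by intro h; rw [h] at him; simp at him
    have h1 : J z = lam • S z := by
      have h2 := congrArg S hz
      rw [hSS] at h2
      simpa [map_smul] using h2
    rw [h1, smul_smul, inv_mul_cancel₀ h0, one_smul]
  have hmu : ∀ lam : ℂ, 0 < lam.im → lam - lam⁻¹ ≠ 0 := by
    intro lam him h
    have h0 : lam ≠ 0 := by intro h'; rw [h'] at him; simp at him
    have h2 : (lam - lam⁻¹).im = lam.im + lam.im / Complex.normSq lam := by
      simp [Complex.sub_im, Complex.inv_im]; ring
    have hd : 0 ≤ lam.im / Complex.normSq lam :=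
      div_nonneg him.le (Complex.normSq_nonneg lam)
    have hpos : 0 < (lam - lam⁻¹).im := by rw [h2]; linarith
    rw [h] at hpos; simp at hpos
  have hSplus : ∀ (lam : ℂ) (z : V), 0 < lam.im → S (J z) = lam • z →
      S (J z + lam • z) = J z + lam • z := by
    intro lam z him hz
    have h0 : lam ≠ 0 := by intro h; rw [h] at him; simp at him
    rw [map_add, map_smul, hz, hSz lam z him hz, smul_smul, mul_inv_cancel₀ h0, one_smul]
    exact add_comm _ _
  have hSminus : ∀ (lam : ℂ) (z : V), 0 < lam.im → S (J z) = lam • z →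
      S (J z - lam • z) = -(J z - lam • z) := by
    intro lam z him hz
    have h0 : lam ≠ 0 := by intro h; rw [h] at him; simp at him
    rw [map_sub, map_smul, hz, hSz lam z him hz, smul_smul, mul_inv_cancel₀ h0, one_smul]
    abel
  set T : V →ₗ[ℂ] V := J ∘ₗ S - S ∘ₗ J with hT
  have hTplus : ∀ (lam : ℂ) (z : V), 0 < lam.im → S (J z) = lam • z →
      T (J z + lam • z) = (lam - lam⁻¹) • (J z - lam • z) := by
    intro lam z him hz
    have h0 : lam ≠ 0 := by intro h; rw [h] at him; simp at him
    simp only [hT, LinearMap.sub_apply, LinearMap.comp_apply, map_add, map_smul, hJJ, hz,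
      hSz lam z him hz]
    match_scalars <;> field_simp <;> ring
  have hTminus : ∀ (lam : ℂ) (z : V), 0 < lam.im → S (J z) = lam • z →
      T (J z - lam • z) = (lam - lam⁻¹) • (J z + lam • z) := by
    intro lam z him hz
    have h0 : lam ≠ 0 := by intro h; rw [h] at him; simp at him
    simp only [hT, LinearMap.sub_apply, LinearMap.comp_apply, map_sub, map_add, map_smul, hJJ,
      hz, hSz lam z him hz]
    match_scalars <;> field_simp <;> ring
  set Pset : Set V :=
    {v : V | ∃ (lam : ℂ) (z : V), 0 < lam.im ∧ S (J z) = lam • z ∧ v = J z + lam • z} with hPs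
  set Mset : Set V :=
    {v : V | ∃ (lam : ℂ) (z : V), 0 < lam.im ∧ S (J z) = lam • z ∧ v = J z - lam • z} with hMs
  have key1 : Submodule.map T (Submodule.span ℂ Pset) = Submodule.span ℂ Mset := by
    rw [Submodule.map_span]
    apply le_antisymm
    · rw [Submodule.span_le]
      rintro w ⟨v, ⟨lam, z, him, hz, rfl⟩, rfl⟩
      rw [hTplus lam z him hz]
      exact Submodule.smul_mem _ _ (Submodule.subset_span ⟨lam, z, him, hz, rfl⟩)
    · rw [Submodule.span_le]
      rintro w ⟨lam, z, him, hz, rfl⟩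
      have hw : (J z - lam • z) = (lam - lam⁻¹)⁻¹ • T (J z + lam • z) := by
        rw [hTplus lam z him hz, smul_smul, inv_mul_cancel₀ (hmu lam him), one_smul]
      rw [hw]
      exact Submodule.smul_mem _ _
        (Submodule.subset_span ⟨J z + lam • z, ⟨lam, z, him, hz, rfl⟩, rfl⟩)
  have key2 : Submodule.map T (Submodule.span ℂ Mset) = Submodule.span ℂ Pset := by
    rw [Submodule.map_span]
    apply le_antisymm
    · rw [Submodule.span_le]
      rintro w ⟨v, ⟨lam, z, him, hz, rfl⟩, rfl⟩
      rw [hTminus lam z him hz]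
      exact Submodule.smul_mem _ _ (Submodule.subset_span ⟨lam, z, him, hz, rfl⟩)
    · rw [Submodule.span_le]
      rintro w ⟨lam, z, him, hz, rfl⟩
      have hw : (J z + lam • z) = (lam - lam⁻¹)⁻¹ • T (J z - lam • z) := by
        rw [hTminus lam z him hz, smul_smul, inv_mul_cancel₀ (hmu lam him), one_smul]
      rw [hw]
      exact Submodule.smul_mem _ _
        (Submodule.subset_span ⟨J z - lam • z, ⟨lam, z, him, hz, rfl⟩, rfl⟩)
  refine ⟨?_, ?_, ?_⟩
  · have h1 := Submodule.finrank_map_le T (Submodule.span ℂ Pset)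
    have h2 := Submodule.finrank_map_le T (Submodule.span ℂ Mset)
    rw [key1] at h1
    rw [key2] at h2
    exact le_antisymm h2 h1
  · intro v hv
    have hle : Submodule.span ℂ Pset ≤ LinearMap.eqLocus S LinearMap.id := by
      rw [Submodule.span_le]
      rintro w ⟨lam, z, him, hz, rfl⟩
      exact hSplus lam z him hz
    exact hle hv
  · intro v hv
    have hle : Submodule.span ℂ Mset ≤ LinearMap.eqLocus S (-LinearMap.id) := by
      rw [Submodule.span_le]
      rintro w ⟨lam, z, him, hz, rfl⟩
      simpa using hSminus lam z him hz
    simpa using hle hv
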